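/- Let f ∈ K((x^{1/q})) with ord_x(f) = -p/q define an irreducible E_{f,q}, let g(x^{1/q}) = f(ζ_q^i x^{1/q}) - f(x^{1/q}) for 1 ≤ i ≤ q-1, and let (q,p;β₁,…,β_g) be the dual Puiseux characteristic with gcd sequence e₀=q, e_k = gcd(e_{k-1},β_k). Then ord_x(f - f_i) = -β_j/q if and only if q/e_{j-1} divides i but q/e_j does not divide i; moreover, for each j the number of indices i ∈ {1,…,q-1} with ord_x(f - f_i) = -β_j/q equals e_{j-1} - e_j. -/

import Mathlib

/-- The conjugate `F(c·t)` of a formal Laurent series `F(t)`: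
the `n`-th coefficient is multiplied by `c^n` (with `zpow` in the field `K`). -/
noncomputable def LaurentSeries.conjRoot {K : Type*} [Field K] (c : K) (F : LaurentSeries K) :
    LaurentSeries K where
  coeff n := c ^ n * F.coeff n
  isPWO_support' := F.isPWO_support.mono (fun n hn => by
    simp only [Function.mem_support] at hn ⊢
    exact fun h => hn (by simp [h]))

/-- The ring homomorphism `K[[x]] → K((t))` sending `x` to `t^N` (for `N > 0`). -/
noncomputable def xpowHom (K : Type*) [Field K] (N : ℕ) (hN : 0 < N) :
    PowerSeries K →+* LaurentSeries K :=
  (HahnSeries.embDomainRingHom (AddMonoidHom.mk' (fun n : ℤ => (N : ℤ) * n) (by intro a b; ring))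
    (fun a b h => mul_left_cancel₀ (show (N : ℤ) ≠ 0 by exact_mod_cast hN.ne') h)
    (fun g g' => mul_le_mul_iff_of_pos_left (show (0 : ℤ) < (N : ℤ) by exact_mod_cast hN))).comp
    (HahnSeries.ofPowerSeries ℤ K)

/-- `DualChar q supp g β e` : the Laurent series (in `t = x^{1/q}`) with support `supp ⊆ ℤ`
has dual Puiseux characteristic `(q, -; β 1, …, β g)` with gcd sequence `e 0 = q, …, e g = 1`:
for each `k < g`, `-β (k+1)` is the least exponent in the support not divisible by `e k`,
and `e (k+1) = gcd (e k) (β (k+1))`. -/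
def DualChar (q : ℕ) (supp : ℤ → Prop) (g : ℕ) (β : ℕ → ℕ) (e : ℕ → ℕ) : Prop :=
  e 0 = q ∧ e g = 1 ∧ ∀ k < g,
    supp (-(β (k + 1) : ℤ)) ∧ ¬ ((e k : ℤ) ∣ (β (k + 1) : ℤ)) ∧
    (∀ i : ℤ, supp i → ¬ ((e k : ℤ) ∣ i) → -(β (k + 1) : ℤ) ≤ i) ∧
    e (k + 1) = Nat.gcd (e k) (β (k + 1))

/-- `PCharZ m supp g β e` : the Puiseux characteristic `(m; β 1, …, β g)` of a
parametrization `x = t^m`, `y = ∑ c_i t^i` with support `supp ⊆ ℤ`: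
for each `k < g`, `β (k+1)` is the least exponent in the support not divisible by
`e k`, with gcd sequence `e 0 = m`, `e (k+1) = gcd (e k) (β (k+1))`, `e g = 1`. -/
def PCharZ (m : ℕ) (supp : ℤ → Prop) (g : ℕ) (β : ℕ → ℕ) (e : ℕ → ℕ) : Prop :=
  e 0 = m ∧ e g = 1 ∧ ∀ k < g,
    supp (β (k + 1) : ℤ) ∧ ¬ ((e k : ℤ) ∣ (β (k + 1) : ℤ)) ∧
    (∀ i : ℤ, supp i → ¬ ((e k : ℤ) ∣ i) → (β (k + 1) : ℤ) ≤ i) ∧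
    e (k + 1) = Nat.gcd (e k) (β (k + 1))

/-- `PCharN` : as `PCharZ`, for supports indexed by `ℕ` (power series parametrizations). -/
def PCharN (m : ℕ) (supp : ℕ → Prop) (g : ℕ) (β : ℕ → ℕ) (e : ℕ → ℕ) : Prop :=
  e 0 = m ∧ e g = 1 ∧ ∀ k < g,
    supp (β (k + 1)) ∧ ¬ (e k ∣ β (k + 1)) ∧
    (∀ i : ℕ, supp i → ¬ (e k ∣ i) → β (k + 1) ≤ i) ∧
    e (k + 1) = Nat.gcd (e k) (β (k + 1))

/-- `RamIrred q N F` : the element `f ∈ K((x^{1/q}))`, expanded as the Laurent series `F`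
in the variable `u = x^{1/N}` (where `q ∣ N`), has irreducible associated connection
`E_{f,q}`, i.e. its image in `R_q` cannot be represented by an element of `K((x^{1/d}))`
for any proper divisor `d` of `q`. -/
def RamIrred {K : Type*} [Field K] (q N : ℕ) (F : LaurentSeries K) : Prop :=
  ∀ d : ℕ, d ∣ q → d < q → ¬ (∀ n : ℤ, n < 0 → F.coeff n ≠ 0 → ((N / d : ℕ) : ℤ) ∣ n)

/-! The coefficient of `t^n` in `F(t) - F(ζ^i t)` is `F_n (1 - ζ^{i n})`, so `F - F_i` has the
support of `F` with the multiples of `m = ord(ζ^i) = q / gcd(q, i)` removed. Its order is then the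
least exponent of `F` not divisible by `m`, which is `-β j` for the unique `j` with
`m ∣ e (j-1)` and `m ∤ e j`; and `m ∣ A ↔ q / A ∣ i` for every divisor `A` of `q`. -/

theorem HahnSeries.order_eq_of_forall_le {Γ R : Type*} [Zero Γ] [LinearOrder Γ] [Zero R]
    {x : HahnSeries Γ R} {a : Γ} (ha : x.coeff a ≠ 0) (hmin : ∀ n, x.coeff n ≠ 0 → a ≤ n) :
    x.order = a :=
  have hx : x ≠ 0 := fun h => ha (by simp [h])
  le_antisymm (order_le_of_coeff_ne_zero ha) (hmin _ (coeff_order_eq_zero.not.mpr hx))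

theorem LaurentSeries.coeff_sub_conjRoot_ne_zero_iff {K : Type*} [Field K] {ω : K} {m : ℕ}
    (hω : IsPrimitiveRoot ω m) (F : LaurentSeries K) (n : ℤ) :
    (F - conjRoot ω F).coeff n ≠ 0 ↔ F.coeff n ≠ 0 ∧ ¬ (m : ℤ) ∣ n := by
  have hcoeff : (F - conjRoot ω F).coeff n = F.coeff n * (1 - ω ^ n) := by
    rw [HahnSeries.coeff_sub, mul_one_sub]
    exact congrArg (F.coeff n - ·) (mul_comm _ _)
  rw [hcoeff, mul_ne_zero_iff, sub_ne_zero, ne_comm (a := 1), ← hω.zpow_eq_one_iff_dvd]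

theorem Nat.exists_lt_and_not_succ {P : ℕ → Prop} {g : ℕ} (h0 : P 0) (hg : ¬ P g) :
    ∃ k < g, P k ∧ ¬ P (k + 1) := by
  by_contra! hstep
  have hP : ∀ k ≤ g, P k := by
    intro k hk
    induction k with
    | zero => exact h0
    | succ k ih => exact hstep k (by omega) (ih (by omega))
  exact hg (hP g le_rfl)

theorem Nat.card_filter_dvd_and_not_dvd {a b n : ℕ} (hab : a ∣ b) (hbn : b ∣ n) :
    Finset.card {i ∈ Finset.Icc 1 (n - 1) | a ∣ i ∧ ¬ b ∣ i} = n / a - n / b := by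
  have hIoc : {i ∈ Finset.Icc 1 (n - 1) | a ∣ i ∧ ¬ b ∣ i} =
      {i ∈ Finset.Ioc 0 n | a ∣ i ∧ ¬ b ∣ i} := by
    ext i
    simp only [Finset.mem_filter, Finset.mem_Icc, Finset.mem_Ioc]
    constructor
    · rintro ⟨⟨hi1, hin⟩, hi⟩
      exact ⟨⟨hi1, by omega⟩, hi⟩
    · rintro ⟨⟨hi0, hin⟩, hai, hbi⟩
      have hne : i ≠ n := by rintro rfl; exact hbi hbn
      exact ⟨⟨hi0, by omega⟩, hai, hbi⟩
  rw [hIoc, Finset.filter_and_not, Finset.card_sdiff_of_subset, Nat.Ioc_filter_dvd_card_eq_div,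
    Nat.Ioc_filter_dvd_card_eq_div]
  exact Finset.monotone_filter_right _ fun _ _ hbi => hab.trans hbi

namespace DualChar

variable {q g : ℕ} {supp : ℤ → Prop} {β e : ℕ → ℕ}

theorem dvd_of_le (h : DualChar q supp g β e) {k l : ℕ} (hkl : k ≤ l) (hlg : l ≤ g) :
    e l ∣ e k := by
  induction l, hkl using Nat.le_induction with
  | base => exact dvd_rfl
  | succ l _ ih =>
    rw [((h.2.2 l (by omega)).2.2.2)]
    exact (Nat.gcd_dvd_left _ _).trans (ih (by omega))

theorem dvd_q (h : DualChar q supp g β e) {k : ℕ} (hkg : k ≤ g) : e k ∣ q :=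
  h.1 ▸ h.dvd_of_le k.zero_le hkg

theorem beta_succ_ne_of_lt (h : DualChar q supp g β e) {k l : ℕ} (hkl : k < l) (hlg : l < g) :
    β (k + 1) ≠ β (l + 1) := by
  intro hβ
  obtain ⟨-, hndvd, -, -⟩ := h.2.2 l hlg
  obtain ⟨-, -, -, hgcd⟩ := h.2.2 k (by omega)
  have hek : e (k + 1) ∣ β (l + 1) := hβ ▸ hgcd ▸ Nat.gcd_dvd_right _ _
  exact hndvd (Int.natCast_dvd_natCast.mpr ((h.dvd_of_le hkl hlg.le).trans hek))

/-- Exponents not divisible by `m` are not divisible by `e k`, and `m ∤ β (k+1)` because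
`e (k+1) = gcd (e k) (β (k+1))`. -/
theorem order_eq_of_dvd_of_not_dvd {R : Type*} [Zero R] (h : DualChar q supp g β e)
    {G : LaurentSeries R} {m : ℕ} (hG : ∀ n, G.coeff n ≠ 0 ↔ supp n ∧ ¬ (m : ℤ) ∣ n)
    {k : ℕ} (hkg : k < g) (hmk : m ∣ e k) (hmk' : ¬ m ∣ e (k + 1)) :
    G.order = -(β (k + 1) : ℤ) := by
  obtain ⟨hsupp, -, hmin, hgcd⟩ := h.2.2 k hkg
  have hmβ : ¬ (m : ℤ) ∣ -(β (k + 1) : ℤ) := by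
    rw [Int.dvd_neg, Int.natCast_dvd_natCast]
    exact fun hβ => hmk' (hgcd ▸ Nat.dvd_gcd hmk hβ)
  refine HahnSeries.order_eq_of_forall_le ((hG _).mpr ⟨hsupp, hmβ⟩) fun n hn => ?_
  obtain ⟨hn, hmn⟩ := (hG n).mp hn
  exact hmin n hn fun hen => hmn ((Int.natCast_dvd_natCast.mpr hmk).trans hen)

theorem order_eq_iff {R : Type*} [Zero R] (h : DualChar q supp g β e)
    {G : LaurentSeries R} {m : ℕ} (hG : ∀ n, G.coeff n ≠ 0 ↔ supp n ∧ ¬ (m : ℤ) ∣ n)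
    (hmq : m ∣ q) (hm1 : m ≠ 1) {k : ℕ} (hkg : k < g) :
    G.order = -(β (k + 1) : ℤ) ↔ m ∣ e k ∧ ¬ m ∣ e (k + 1) := by
  refine ⟨fun hord => ?_, fun hk => h.order_eq_of_dvd_of_not_dvd hG hkg hk.1 hk.2⟩
  obtain ⟨l, hlg, hml, hml'⟩ :=
    Nat.exists_lt_and_not_succ (P := (m ∣ e ·)) (h.1 ▸ hmq) (by rw [h.2.1]; simpa using hm1)
  have hβ : β (l + 1) = β (k + 1) := by
    have := (h.order_eq_of_dvd_of_not_dvd hG hlg hml hml').symm.trans hord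
    omega
  obtain rfl : l = k := by
    rcases Nat.lt_trichotomy l k with hlk | hlk | hkl
    · exact absurd hβ (h.beta_succ_ne_of_lt hlk hkg)
    · exact hlk
    · exact absurd hβ.symm (h.beta_succ_ne_of_lt hkl hlg)
  exact ⟨hml, hml'⟩

end DualChar

theorem IsPrimitiveRoot.orderOf_pow_dvd_iff {M : Type*} [CommMonoid M] {ζ : M} {q : ℕ}
    (hζ : IsPrimitiveRoot ζ q) (hq : 0 < q) (i : ℕ) {A : ℕ} (hAq : A ∣ q) :
    orderOf (ζ ^ i) ∣ A ↔ q / A ∣ i := by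
  have hA : 0 < A := Nat.pos_of_dvd_of_pos hAq hq
  rw [orderOf_dvd_iff_pow_eq_one, ← pow_mul, hζ.pow_eq_one_iff_dvd,
    Nat.div_dvd_iff_dvd_mul hAq hA, mul_comm]

theorem order_difference_conjugates_general {K : Type*} [Field K]
    (q : ℕ) (hq : 0 < q)
    (ζ : K) (hζ : IsPrimitiveRoot ζ q)
    (F : LaurentSeries K)
    (g : ℕ) (β e : ℕ → ℕ)
    (hchar : DualChar q (fun n => F.coeff n ≠ 0) g β e) :
    ∀ j : ℕ, 1 ≤ j → j ≤ g →
      (∀ i : ℕ, 1 ≤ i → i ≤ q - 1 →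
        ((F - LaurentSeries.conjRoot (ζ ^ i) F).order = -(β j : ℤ) ↔
          (q / e (j - 1) ∣ i ∧ ¬ (q / e j ∣ i)))) ∧
      ((Finset.Icc 1 (q - 1)).filter
          (fun i => (F - LaurentSeries.conjRoot (ζ ^ i) F).order = -(β j : ℤ))).card =
        e (j - 1) - e j := by
  intro j hj1 hjg
  obtain ⟨k, rfl⟩ : ∃ k, j = k + 1 := ⟨j - 1, by omega⟩
  have horder : ∀ i, 1 ≤ i → i ≤ q - 1 →
      ((F - LaurentSeries.conjRoot (ζ ^ i) F).order = -(β (k + 1) : ℤ) ↔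
        (q / e k ∣ i ∧ ¬ q / e (k + 1) ∣ i)) := by
    intro i hi1 hiq
    have hω := IsPrimitiveRoot.orderOf (ζ ^ i)
    have hm1 : orderOf (ζ ^ i) ≠ 1 := by
      rw [Ne, orderOf_eq_one_iff]
      exact hζ.pow_ne_one_of_pos_of_lt (by omega) (by omega)
    rw [hchar.order_eq_iff (LaurentSeries.coeff_sub_conjRoot_ne_zero_iff hω F)
        ((hζ.orderOf_pow_dvd_iff hq i dvd_rfl).mpr (Nat.div_self hq ▸ one_dvd i)) hm1 (by omega),
      hζ.orderOf_pow_dvd_iff hq i (hchar.dvd_q (by omega)),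
      hζ.orderOf_pow_dvd_iff hq i (hchar.dvd_q hjg)]
  refine ⟨horder, ?_⟩
  rw [Finset.filter_congr fun i hi => horder i (Finset.mem_Icc.mp hi).1 (Finset.mem_Icc.mp hi).2,
    Nat.card_filter_dvd_and_not_dvd
      (Nat.div_dvd_div_left (hchar.dvd_q (k := k) (by omega)) (hchar.dvd_of_le k.le_succ hjg))
      (Nat.div_dvd_of_dvd (hchar.dvd_q hjg)),
    Nat.div_div_self (hchar.dvd_q (k := k) (by omega)) hq.ne',
    Nat.div_div_self (hchar.dvd_q hjg) hq.ne']
  rfl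

/-- Let `f` define an irreducible `E_{f,q}` with dual Puiseux
characteristic `(q, p; β 1, …, β g)` and gcd sequence `e`, and let `f_i(t) = f(ζ^i t)`
where `F` is the expansion of `f` in `t = x^{1/q}`.  Then for `1 ≤ j ≤ g` and
`1 ≤ i ≤ q-1`: `ord_x (f - f_i) = -β j / q` (i.e. `ord_t (F - F_i) = -β j`) if and only
if `q / e (j-1)` divides `i` and `q / e j` does not divide `i`; moreover the number of
indices `i ∈ {1, …, q-1}` with `ord_t (F - F_i) = -β j` equals `e (j-1) - e j`. -/
theorem order_difference_conjugates {K : Type*} [Field K] [CharZero K] [IsAlgClosed K]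
    (q p : ℕ) (hq : 0 < q) (hp : 0 < p)
    (ζ : K) (hζ : IsPrimitiveRoot ζ q)
    (F : LaurentSeries K)
    (hFlow : ∀ n : ℤ, n < -(p : ℤ) → F.coeff n = 0)
    (hFlead : F.coeff (-(p : ℤ)) ≠ 0)
    (hFirr : RamIrred q q F)
    (g : ℕ) (β e : ℕ → ℕ)
    (hchar : DualChar q (fun n => F.coeff n ≠ 0) g β e) :
    ∀ j : ℕ, 1 ≤ j → j ≤ g →
      (∀ i : ℕ, 1 ≤ i → i ≤ q - 1 →
        ((F - LaurentSeries.conjRoot (ζ ^ i) F).order = -(β j : ℤ) ↔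
          (q / e (j - 1) ∣ i ∧ ¬ (q / e j ∣ i)))) ∧
      ((Finset.Icc 1 (q - 1)).filter
          (fun i => (F - LaurentSeries.conjRoot (ζ ^ i) F).order = -(β j : ℤ))).card =
        e (j - 1) - e j :=
  order_difference_conjugates_general q hq ζ hζ F g β e hchar
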